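/- Let N ≥ 1, let f_1, …, f_N be real numbers and let δ > 0. Then strong Lagrangian duality holds for the penalized χ²-divergence distributionally robust problem: sup over q in the probability simplex Δ^N of [ Σ_{i=1}^N q_i f_i − δ·(1/(2N)) Σ_{i=1}^N (N q_i − 1)² ] = inf over λ ∈ ℝ of (1/N) Σ_{i=1}^N [ δ·φ*((f_i − λ)/δ) ] + λ, where φ*(s) = −½ for s < −1 and φ*(s) = ½s² + s for s ≥ −1. -/

import Mathlib

/-!
For `t = N q_i ≥ 0` and `s = (f_i - λ)/δ`, the Fenchel–Young inequality `s t - φ(t) ≤ φ*(s)`,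
summed with weights `δ/N` and combined with `∑ q_i = 1`, gives weak duality: every primal
value is at most every dual value. Equality holds at `t = max 0 (1 + s)`, so it suffices to
pick `λ` for which these maximisers are a probability vector after dividing by `N`, i.e.
`∑ max 0 (1 + (f_i - λ)/δ) = N`; such a `λ` exists by the intermediate value theorem, the left
side being continuous, at least `N` at `λ = min f` and `0` at `λ = max f + δ`. A primal value
that is also a dual value is then both the supremum and the infimum.
-/

open Finset

/-- The conjugate of the (modified) χ²-divergence generator. -/
noncomputable def phiStar (s : ℝ) : ℝ :=
  if s < -1 then -(1 / 2) else (1 / 2) * s ^ 2 + s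

lemma mul_sub_sq_le_phiStar {s t : ℝ} (ht : 0 ≤ t) : s * t - (t - 1) ^ 2 / 2 ≤ phiStar s := by
  unfold phiStar
  split_ifs with h
  · nlinarith [mul_nonneg ht (by linarith : (0 : ℝ) ≤ t / 2 - 1 - s)]
  · nlinarith [sq_nonneg (s - t + 1)]

lemma mul_sub_sq_max_eq_phiStar (s : ℝ) :
    s * max 0 (1 + s) - (max 0 (1 + s) - 1) ^ 2 / 2 = phiStar s := by
  unfold phiStar
  split_ifs with h
  · rw [max_eq_left (by linarith)]; ring
  · rw [max_eq_right (by linarith)]; ring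

lemma csSup_eq_csInf_of_forall_le_of_mem {α : Type*} [ConditionallyCompleteLattice α]
    {S T : Set α} (h : ∀ x ∈ S, ∀ y ∈ T, x ≤ y) {c : α} (hS : c ∈ S) (hT : c ∈ T) :
    sSup S = sInf T :=
  (IsGreatest.csSup_eq ⟨hS, fun x hx => h x hx c hT⟩).trans
    (IsLeast.csInf_eq ⟨hT, fun y hy => h c hS y hy⟩).symm

section Duality

variable {ι : Type*} [Fintype ι] (f : ι → ℝ) {δ n : ℝ}

lemma penalized_objective_eq (hn : n ≠ 0) (hδ : δ ≠ 0) (l : ℝ) {q : ι → ℝ}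
    (hq : ∑ i, q i = 1) :
    ∑ i, q i * f i - δ * (1 / (2 * n) * ∑ i, (n * q i - 1) ^ 2) =
      l + δ / n * ∑ i, ((f i - l) / δ * (n * q i) - (n * q i - 1) ^ 2 / 2) := by
  have hlin : ∑ i, q i * f i = l + ∑ i, q i * (f i - l) := by
    simp only [mul_sub, sum_sub_distrib, ← sum_mul, hq]; ring
  rw [hlin, mul_sum, mul_sum, mul_sum, add_sub_assoc, ← sum_sub_distrib]
  congr 1
  refine sum_congr rfl fun i _ => ?_
  field_simp

lemma dual_objective_eq (l : ℝ) :
    1 / n * ∑ i, δ * phiStar ((f i - l) / δ) + l = l + δ / n * ∑ i, phiStar ((f i - l) / δ) := by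
  rw [← mul_sum]; ring

lemma penalized_objective_le_dual (hn : 0 < n) (hδ : 0 < δ) (l : ℝ) {q : ι → ℝ}
    (hq₀ : ∀ i, 0 ≤ q i) (hq : ∑ i, q i = 1) :
    ∑ i, q i * f i - δ * (1 / (2 * n) * ∑ i, (n * q i - 1) ^ 2) ≤
      1 / n * ∑ i, δ * phiStar ((f i - l) / δ) + l := by
  rw [penalized_objective_eq f hn.ne' hδ.ne' l hq, dual_objective_eq]
  gcongr with i
  exact mul_sub_sq_le_phiStar (mul_nonneg hn.le (hq₀ i))

lemma penalized_objective_eq_dual_of_max (hn : n ≠ 0) (hδ : δ ≠ 0) (l : ℝ)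
    (hq : ∑ i, max 0 (1 + (f i - l) / δ) / n = 1) :
    ∑ i, max 0 (1 + (f i - l) / δ) / n * f i -
        δ * (1 / (2 * n) * ∑ i, (n * (max 0 (1 + (f i - l) / δ) / n) - 1) ^ 2) =
      1 / n * ∑ i, δ * phiStar ((f i - l) / δ) + l := by
  rw [penalized_objective_eq f hn hδ l hq, dual_objective_eq]
  simp only [mul_div_cancel₀ _ hn, mul_sub_sq_max_eq_phiStar]

lemma exists_sum_max_eq_card [Nonempty ι] (hδ : 0 < δ) :
    ∃ l, ∑ i, max 0 (1 + (f i - l) / δ) = Fintype.card ι := by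
  set a := univ.inf' univ_nonempty f
  set b := univ.sup' univ_nonempty f + δ
  have hcont : Continuous fun l => ∑ i, max 0 (1 + (f i - l) / δ) := by fun_prop
  have hga : (Fintype.card ι : ℝ) ≤ ∑ i, max 0 (1 + (f i - a) / δ) := by
    rw [← nsmul_one, ← card_univ, ← sum_const]
    refine sum_le_sum fun i _ => le_max_of_le_right ?_
    have : 0 ≤ (f i - a) / δ := div_nonneg (sub_nonneg.2 (inf'_le f (mem_univ i))) hδ.le
    linarith
  have hgb : ∑ i, max 0 (1 + (f i - b) / δ) = 0 := by
    refine sum_eq_zero fun i _ => max_eq_left ?_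
    have : (f i - b) / δ ≤ -1 := by
      rw [div_le_iff₀ hδ]
      linarith [le_sup' f (mem_univ i)]
    linarith
  have hab : a ≤ b := by
    obtain ⟨i⟩ := ‹Nonempty ι›
    linarith [inf'_le f (mem_univ i), le_sup' f (mem_univ i)]
  obtain ⟨l, -, hl⟩ := intermediate_value_Icc' hab hcont.continuousOn
    ⟨by rw [hgb]; exact Nat.cast_nonneg _, hga⟩
  exact ⟨l, hl⟩

end Duality

/-- Strong Lagrangian duality for the penalized χ²-divergence DRO problem. -/
theorem dro_chi2_penalized_duality
    (N : ℕ) (hN : 1 ≤ N) (f : Fin N → ℝ) (δ : ℝ) (hδ : 0 < δ) :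
    sSup {y : ℝ | ∃ q : Fin N → ℝ, (∀ i, 0 ≤ q i) ∧ (∑ i, q i = 1) ∧
        y = (∑ i, q i * f i) -
          δ * ((1 / (2 * (N : ℝ))) * ∑ i, ((N : ℝ) * q i - 1) ^ 2)} =
      sInf {y : ℝ | ∃ l : ℝ,
        y = (1 / (N : ℝ)) * (∑ i, δ * phiStar ((f i - l) / δ)) + l} := by
  have : Nonempty (Fin N) := ⟨⟨0, hN⟩⟩
  have hNpos : (0 : ℝ) < N := by exact_mod_cast hN
  obtain ⟨l, hl⟩ := exists_sum_max_eq_card f hδ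
  have hq : ∑ i, max 0 (1 + (f i - l) / δ) / N = 1 := by
    rw [← sum_div, hl, Fintype.card_fin, div_self hNpos.ne']
  refine csSup_eq_csInf_of_forall_le_of_mem ?_
    ⟨_, fun i => by positivity, hq,
      (penalized_objective_eq_dual_of_max f hNpos.ne' hδ.ne' l hq).symm⟩ ⟨l, rfl⟩
  rintro _ ⟨q, hq₀, hq₁, rfl⟩ _ ⟨l', rfl⟩
  exact penalized_objective_le_dual f hNpos hδ l' hq₀ hq₁
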